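/- For every deterministic classical sequential strategy—an encoding e : {0,1}² → {0,1}, Bob's output function f : {0,1} × {0,1} → {0,1}, Bob's relay function g : {0,1} × {0,1} → {0,1}, and Charlie's output function h : {0,1} × {0,1} → {0,1}—both witnesses W_AB = (1/8)·Σ_{x,y} [f(y, e(x)) = x_y] and W_AC = (1/16)·Σ_{x,y,z} [h(z, g(y, e(x))) = x_z] satisfy W_AB ≤ 3/4 and W_AC ≤ 3/4; moreover there exists such a strategy with W_AB = W_AC = 3/4 simultaneously. -/
import Mathlib

noncomputable section

/-- The bit `x_y` of `x = (x₀, x₁)`. -/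
def bit (x : Bool × Bool) (y : Bool) : Bool := if y then x.2 else x.1

/-- Bob's witness for a deterministic classical sequential strategy. -/
def cWAB (e : Bool × Bool → Bool) (f : Bool → Bool → Bool) : ℝ :=
  (1 / 8) * ∑ x : Bool × Bool, ∑ y : Bool,
    (if f y (e x) = bit x y then 1 else 0)

/-- Charlie's witness for a deterministic classical sequential strategy. -/
def cWAC (e : Bool × Bool → Bool) (g : Bool → Bool → Bool)
    (h : Bool → Bool → Bool) : ℝ :=
  (1 / 16) * ∑ x : Bool × Bool, ∑ y : Bool, ∑ z : Bool,
    (if h z (g y (e x)) = bit x z then 1 else 0)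

def nAB (e : Bool × Bool → Bool) (f : Bool → Bool → Bool) : ℕ :=
  ∑ x : Bool × Bool, ∑ y : Bool, (if f y (e x) = bit x y then 1 else 0)

def nAC (e : Bool × Bool → Bool) (g h : Bool → Bool → Bool) : ℕ :=
  ∑ x : Bool × Bool, ∑ y : Bool, ∑ z : Bool,
    (if h z (g y (e x)) = bit x z then 1 else 0)

lemma cWAB_eq (e : Bool × Bool → Bool) (f : Bool → Bool → Bool) :
    cWAB e f = (nAB e f : ℝ) / 8 := by
  unfold cWAB nAB
  push_cast
  ring

lemma cWAC_eq (e : Bool × Bool → Bool) (g h : Bool → Bool → Bool) :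
    cWAC e g h = (nAC e g h : ℝ) / 16 := by
  unfold cWAC nAC
  push_cast
  ring

lemma nAB_le : ∀ (e : Bool × Bool → Bool) (f : Bool → Bool → Bool), nAB e f ≤ 6 := by
  decide

lemma nAC_eq (e : Bool × Bool → Bool) (g h : Bool → Bool → Bool) :
    nAC e g h = ∑ y : Bool, nAB e (fun z m => h z (g y m)) := by
  unfold nAC nAB
  rw [Finset.sum_comm]

lemma nAC_le (e : Bool × Bool → Bool) (g h : Bool → Bool → Bool) : nAC e g h ≤ 12 := by
  rw [nAC_eq, Fintype.sum_bool]
  have h1 := nAB_le e (fun z m => h z (g true m))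
  have h2 := nAB_le e (fun z m => h z (g false m))
  omega

/-- In the classical sequential 2→1 random access code both witnesses are
bounded by `3/4`, and this pair of values is simultaneously attainable. -/
theorem classical_sequential_rac_bound :
    (∀ (e : Bool × Bool → Bool) (f g h : Bool → Bool → Bool),
      cWAB e f ≤ 3 / 4 ∧ cWAC e g h ≤ 3 / 4) ∧
    (∃ (e : Bool × Bool → Bool) (f g h : Bool → Bool → Bool),
      cWAB e f = 3 / 4 ∧ cWAC e g h = 3 / 4) := by
  constructor
  · intro e f g h
    constructor
    · rw [cWAB_eq]
      have := nAB_le e f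
      have : (nAB e f : ℝ) ≤ 6 := by exact_mod_cast this
      linarith
    · rw [cWAC_eq]
      have := nAC_le e g h
      have : (nAC e g h : ℝ) ≤ 12 := by exact_mod_cast this
      linarith
  · refine ⟨fun x => x.1, fun _ m => m, fun _ m => m, fun _ m => m, ?_, ?_⟩
    · rw [cWAB_eq]
      norm_num [show nAB (fun x => x.1) (fun _ m => m) = 6 from by decide]
    · rw [cWAC_eq]
      norm_num [show nAC (fun x => x.1) (fun _ m => m) (fun _ m => m) = 12 from by decide]

end
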